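/- Every family S of (ℓ−1)-element subsets of a finite vertex set covers at most ((ℓ−1)!·|S|)^(ℓ/(ℓ−1))/ℓ! many ℓ-element sets, where an ℓ-set is covered if all of its (ℓ−1)-element subsets lie in S. -/

import Mathlib

/-!
List each of the `m` covered `ℓ`-sets in all `ℓ!` orders: this gives a set `A ⊆ V^ℓ` of `ℓ! · m`
injective tuples. Forgetting coordinate `i` turns each of them into an ordering of a member of `S`,
so the projection `πᵢ A` has at most `(ℓ-1)! · |S|` elements, and the discrete Loomis–Whitney
inequality gives `(ℓ! · m)^(ℓ-1) ≤ ∏ᵢ |πᵢ A| ≤ ((ℓ-1)! · |S|)^ℓ`.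
Loomis–Whitney itself follows by induction on the number of coordinates: split `A` by the value
of one coordinate and recombine the fibres with Hölder's inequality for several functions.
-/

open Finset Function MeasureTheory
open scoped NNReal ENNReal Nat

theorem NNReal.sum_prod_rpow_le_prod_sum_rpow {α ι : Type*} (X : Finset α) (s : Finset ι)
    (g : ι → α → ℝ≥0) {w : ι → ℝ} (hw : ∀ i ∈ s, 0 ≤ w i) (hw₁ : ∑ i ∈ s, w i = 1) :
    ∑ x ∈ X, ∏ i ∈ s, g i x ^ w i ≤ ∏ i ∈ s, (∑ x ∈ X, g i x) ^ w i := by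
  let _ : MeasurableSpace α := ⊤
  have := ENNReal.lintegral_prod_norm_pow_le (μ := Measure.count.restrict X) s
    (f := fun i x => (g i x : ℝ≥0∞)) (fun i _ => .of_discrete) hw₁ hw
  simp only [lintegral_finset, Measure.count_singleton, mul_one] at this
  rw [← ENNReal.coe_le_coe]
  push_cast
  convert this using 3 with x _ i hi i hi
  · exact ENNReal.coe_rpow_of_nonneg _ (hw i hi)
  · rw [ENNReal.coe_rpow_of_nonneg _ (hw i hi), ENNReal.ofNNReal_finsetSum]

theorem NNReal.sum_pow_card_le_mul_prod_sum {α ι : Type*} (X : Finset α) {s : Finset ι}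
    (hs : s.Nonempty) (a : α → ℝ≥0) (P : ℝ≥0) (g : ι → α → ℝ≥0)
    (h : ∀ x ∈ X, a x ^ #s ≤ P * ∏ i ∈ s, g i x) :
    (∑ x ∈ X, a x) ^ #s ≤ P * ∏ i ∈ s, ∑ x ∈ X, g i x := by
  have hn : (0 : ℝ) < #s := by exact_mod_cast hs.card_pos
  rw [← NNReal.rpow_natCast, ← NNReal.le_rpow_inv_iff hn]
  calc ∑ x ∈ X, a x
      ≤ ∑ x ∈ X, (P * ∏ i ∈ s, g i x) ^ (#s : ℝ)⁻¹ := by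
        gcongr with x hx
        rw [NNReal.le_rpow_inv_iff hn, NNReal.rpow_natCast]
        exact h x hx
    _ = P ^ (#s : ℝ)⁻¹ * ∑ x ∈ X, ∏ i ∈ s, g i x ^ (#s : ℝ)⁻¹ := by
        simp only [NNReal.mul_rpow, NNReal.finsetProd_rpow, mul_sum]
    _ ≤ P ^ (#s : ℝ)⁻¹ * ∏ i ∈ s, (∑ x ∈ X, g i x) ^ (#s : ℝ)⁻¹ := by
        gcongr
        refine NNReal.sum_prod_rpow_le_prod_sum_rpow X s g (fun _ _ => by positivity) ?_
        rw [sum_const, nsmul_eq_mul, mul_inv_cancel₀ hn.ne']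
    _ = (P * ∏ i ∈ s, ∑ x ∈ X, g i x) ^ (#s : ℝ)⁻¹ := by
        rw [NNReal.mul_rpow, NNReal.finsetProd_rpow]

theorem Real.le_rpow_div_of_pow_le_pow {x y : ℝ} (hx : 0 ≤ x) (hy : 0 ≤ y) {m n : ℕ}
    (hn : n ≠ 0) (h : x ^ n ≤ y ^ m) : x ≤ y ^ ((m : ℝ) / n) := by
  rw [div_eq_mul_inv, Real.rpow_mul hy, Real.rpow_natCast,
    Real.le_rpow_inv_iff_of_pos hx (by positivity) (by positivity), Real.rpow_natCast]
  exact h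

section LoomisWhitney

variable {ι α : Type*} [Fintype ι] [DecidableEq ι] [DecidableEq α]

theorem Finset.card_filter_apply_eq_le_card_image_update (A : Finset (ι → α)) (a : ι) (x v : α) :
    #(A.filter (· a = x)) ≤ #(A.image (update · a v)) := by
  refine card_le_card_of_injOn (update · a v)
    (fun f hf => mem_image_of_mem _ (mem_filter.1 hf).1) fun f hf g hg hfg => ?_
  have hf' : f a = x := (mem_filter.1 hf).2
  have hg' : g a = x := (mem_filter.1 hg).2
  calc f = update (update f a v) a x := by rw [update_idem, ← hf', update_eq_self]
    _ = update (update g a v) a x := congrArg (update · a x) hfg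
    _ = g := by rw [update_idem, ← hg', update_eq_self]

theorem Finset.sum_card_image_update_filter_apply_eq (A : Finset (ι → α)) {a i : ι} (hai : a ≠ i)
    (v : α) :
    ∑ x ∈ A.image (· a), #((A.filter (· a = x)).image (update · i v))
      = #(A.image (update · i v)) := by
  rw [card_eq_sum_card_fiberwise (f := fun g : ι → α => g a) (t := A.image (· a)) ?_]
  · refine sum_congr rfl fun x _ => ?_
    simp [filter_image, update_of_ne hai]
  · intro g hg
    obtain ⟨f, hf, rfl⟩ := mem_image.1 hg
    exact mem_image.2 ⟨f, hf, (update_of_ne hai _ _).symm⟩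

/-- `update · i v` plays the role of the projection forgetting coordinate `i`. -/
theorem Finset.loomis_whitney (v : α) {s : Finset ι} (hs : s.Nonempty) {A : Finset (ι → α)}
    (hA : A.Nonempty) :
    #A ^ (#s - 1) ≤ ∏ i ∈ s, #(A.image (update · i v)) := by
  induction hs using Finset.Nonempty.cons_induction generalizing A with
  | singleton a => simpa using (hA.image (update · a v)).card_pos
  | cons a s ha hs ih =>
    rw [card_cons, Nat.add_sub_cancel, prod_cons]
    set fiber : α → Finset (ι → α) := fun x => A.filter (· a = x)
    have hfiber (x : α) (hx : x ∈ A.image (· a)) :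
        #(fiber x) ^ #s
          ≤ #(A.image (update · a v)) * ∏ i ∈ s, #((fiber x).image (update · i v)) := by
      have hne : (fiber x).Nonempty := by
        obtain ⟨f, hf, rfl⟩ := mem_image.1 hx
        exact ⟨f, mem_filter.2 ⟨hf, rfl⟩⟩
      rw [← Nat.sub_add_cancel hs.card_pos, pow_succ, mul_comm]
      exact Nat.mul_le_mul (A.card_filter_apply_eq_le_card_image_update a x v) (ih hne)
    have := NNReal.sum_pow_card_le_mul_prod_sum (A.image (· a)) hs (fun x => #(fiber x))
      #(A.image (update · a v)) (fun i x => #((fiber x).image (update · i v)))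
      fun x hx => by exact_mod_cast hfiber x hx
    rw [card_eq_sum_card_fiberwise fun f hf => mem_image_of_mem (· a) hf,
      ← prod_congr rfl fun i hi => A.sum_card_image_update_filter_apply_eq
        (ne_of_mem_of_not_mem hi ha).symm v]
    exact_mod_cast this

end LoomisWhitney

section Enumerations

variable {V : Type*} [Fintype V] [DecidableEq V]

def enumerations (𝒮 : Finset (Finset V)) (k : ℕ) : Finset (Fin k → V) :=
  {f | Injective f ∧ univ.image f ∈ 𝒮}

def coveredSets (S : Finset (Finset V)) (ℓ : ℕ) : Finset (Finset V) :=
  {T | #T = ℓ ∧ ∀ s ⊆ T, #s = ℓ - 1 → s ∈ S}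

theorem card_filter_injective_image_eq {s : Finset V} {k : ℕ} (hs : #s = k) :
    #{f : Fin k → V | Injective f ∧ univ.image f = s} = k ! := by
  have e : Fin k ≃ s := (s.equivFinOfCardEq hs).symm
  symm
  calc k ! = #(univ : Finset (Fin k ≃ s)) := by
        rw [card_univ, Fintype.card_equiv e, Fintype.card_fin]
    _ = _ := by
      refine card_bij (fun σ _ => Subtype.val ∘ σ) (fun σ _ => ?_) (fun σ₁ _ σ₂ _ h => ?_) ?_
      · refine mem_filter.2 ⟨mem_univ _, Subtype.val_injective.comp σ.injective, ?_⟩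
        ext x
        simp only [mem_image, mem_univ, true_and, comp_apply]
        exact ⟨by rintro ⟨j, rfl⟩; exact (σ j).2, fun hx => ⟨σ.symm ⟨x, hx⟩, by simp⟩⟩
      · exact Equiv.ext fun j => Subtype.val_injective (congrFun h j)
      · intro f hf
        obtain ⟨hinj, himage⟩ := (mem_filter.1 hf).2
        have hmem (j : Fin k) : f j ∈ s := himage ▸ mem_image_of_mem f (mem_univ j)
        have hbij : Bijective fun j => (⟨f j, hmem j⟩ : s) :=
          (Fintype.bijective_iff_injective_and_card _).2
            ⟨fun j₁ j₂ h => hinj (congrArg Subtype.val h), by simp [hs]⟩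
        exact ⟨Equiv.ofBijective _ hbij, mem_univ _, rfl⟩

theorem card_enumerations {𝒮 : Finset (Finset V)} {k : ℕ} (h𝒮 : ∀ s ∈ 𝒮, #s = k) :
    #(enumerations 𝒮 k) = k ! * #𝒮 := by
  rw [card_eq_sum_card_fiberwise (f := fun f => univ.image f) (t := 𝒮)
    fun f hf => (mem_filter.1 hf).2.2, mul_comm, ← smul_eq_mul, ← sum_const]
  refine sum_congr rfl fun s hs => ?_
  rw [← card_filter_injective_image_eq (h𝒮 s hs), enumerations, filter_filter]
  exact congrArg card <| filter_congr fun f _ =>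
    ⟨fun ⟨⟨hinj, _⟩, himage⟩ => ⟨hinj, himage⟩, fun ⟨hinj, himage⟩ => ⟨⟨hinj, himage ▸ hs⟩, himage⟩⟩

theorem card_image_update_enumerations_coveredSets_le (S : Finset (Finset V)) {n : ℕ}
    (i : Fin (n + 1)) (v : V) :
    #((enumerations (coveredSets S (n + 1)) (n + 1)).image (update · i v))
      ≤ #(enumerations S n) := by
  set A := enumerations (coveredSets S (n + 1)) (n + 1)
  calc #(A.image (update · i v))
        = #((A.image fun f => i.removeNth f).image
            fun g => Fin.insertNth (α := fun _ => V) i v g) := by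
        simp only [image_image, comp_def, Fin.insertNth_removeNth]
    _ ≤ #(A.image fun f => i.removeNth f) := card_image_le
    _ ≤ #(enumerations S n) := by
      refine card_le_card (image_subset_iff.2 fun f hf => ?_)
      obtain ⟨hinj, hT⟩ := (mem_filter.1 hf).2
      obtain ⟨-, hcov⟩ := (mem_filter.1 hT).2
      have hinj' : Injective (i.removeNth f) := hinj.comp Fin.succAbove_right_injective
      refine mem_filter.2 ⟨mem_univ _, hinj', hcov _ ?_ ?_⟩
      · exact image_subset_iff.2 fun j _ => mem_image_of_mem f (mem_univ _)
      · simp [card_image_of_injective _ hinj']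

theorem card_coveredSets_pow_le {S : Finset (Finset V)} {n : ℕ} (hn : n ≠ 0)
    (hS : ∀ s ∈ S, #s = n) :
    ((n + 1)! * #(coveredSets S (n + 1))) ^ n ≤ (n ! * #S) ^ (n + 1) := by
  rw [← card_enumerations fun T hT => (mem_filter.1 hT).2.1]
  set A := enumerations (coveredSets S (n + 1)) (n + 1)
  obtain hA | ⟨f, hf⟩ := A.eq_empty_or_nonempty
  · simp [hA, hn]
  calc #A ^ n = #A ^ (#(univ : Finset (Fin (n + 1))) - 1) := by simp
    _ ≤ ∏ i, #(A.image (update · i (f 0))) := loomis_whitney _ univ_nonempty ⟨f, hf⟩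
    _ ≤ ∏ _i : Fin (n + 1), n ! * #S := prod_le_prod' fun i _ =>
      (card_image_update_enumerations_coveredSets_le S i _).trans (card_enumerations hS).le
    _ = (n ! * #S) ^ (n + 1) := by simp

end Enumerations

/-- Kruskal–Katona covering bound: a family `S` of `(ℓ−1)`-subsets covers at most
`((ℓ−1)!·|S|)^(ℓ/(ℓ−1))/ℓ!` many `ℓ`-sets, where an `ℓ`-set is covered if all of its
`(ℓ−1)`-subsets lie in `S`. -/
theorem stmt_16 (ℓ : ℕ) (hℓ : 2 ≤ ℓ) (V : Type*) [DecidableEq V] [Fintype V]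
    (S : Finset (Finset V)) (hS : ∀ s ∈ S, s.card = ℓ - 1) :
    ({T : Finset V | T.card = ℓ ∧ ∀ s ⊆ T, s.card = ℓ - 1 → s ∈ S}.ncard : ℝ)
      ≤ ((Nat.factorial (ℓ - 1) : ℝ) * (S.card : ℝ)) ^ ((ℓ : ℝ) / ((ℓ : ℝ) - 1))
          / (Nat.factorial ℓ : ℝ) := by
  obtain ⟨n, rfl⟩ : ∃ n, ℓ = n + 1 := ⟨ℓ - 1, by omega⟩
  have hn : n ≠ 0 := by omega
  have hncard : {T : Finset V | #T = n + 1 ∧ ∀ s ⊆ T, #s = n + 1 - 1 → s ∈ S}.ncard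
      = #(coveredSets S (n + 1)) := by
    rw [← Set.ncard_coe_finset, coveredSets, coe_filter]
    simp
  have hexp : ((n + 1 : ℕ) : ℝ) / ((n + 1 : ℕ) - 1 : ℝ) = (n + 1 : ℕ) / (n : ℝ) := by
    push_cast
    ring
  rw [hncard, hexp, le_div_iff₀ (by positivity), mul_comm]
  simp only [Nat.add_sub_cancel] at hS ⊢
  exact Real.le_rpow_div_of_pow_le_pow (by positivity) (by positivity) hn
    (by exact_mod_cast card_coveredSets_pow_le hn hS)
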